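/- Let α > 0 and let u ∈ C⁴([0,1/2]) satisfy the elastica equation (1/√(1+u'²)) · d/dx( κ_u'/√(1+u'²) ) + (1/2)κ_u³ = 0 on (0,1/2), where κ_u = u''/(1+u'²)^{3/2}, with initial data u(0) = 0, u'(0) = α, u''(0) = 0, u'''(0) = β_*(α), and suppose u'(1/2) = 0. Then u(1/2) = J(α)/(2 I(α)), where I(α) = ∫₀^α (√α/√(α−s)) (1+s²)^{-5/4} ds and J(α) = ∫₀^α (√α/√(α−s)) · s (1+s²)^{-5/4} ds. -/

import Mathlib

open Real MeasureTheory

/-- The curvature of the graph `(x, u x)`. -/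
noncomputable def curv (u : ℝ → ℝ) (x : ℝ) : ℝ :=
  iteratedDeriv 2 u x / (1 + deriv u x ^ 2) ^ ((3:ℝ)/2)

/-- `u` satisfies the elastica equation
`(1/√(1+u'²)) (κ_u'/√(1+u'²))' + κ_u³/2 = 0` on the set `E`. -/
def ElasticaOn (u : ℝ → ℝ) (E : Set ℝ) : Prop :=
  ∀ x ∈ E,
    (1 / Real.sqrt (1 + deriv u x ^ 2)) *
        deriv (fun y => deriv (curv u) y / Real.sqrt (1 + deriv u y ^ 2)) x
      + (1/2) * curv u x ^ 3 = 0

/-- `β_*(α) = −2(1+α²)^{5/2} (∫₀^α (α−t)^{-1/2}(1+t²)^{-5/4} dt)²`. -/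
noncomputable def βstar (α : ℝ) : ℝ :=
  -2 * (1 + α ^ 2) ^ ((5:ℝ)/2) *
    (∫ t in (0:ℝ)..α, (α - t) ^ (-(1:ℝ)/2) * (1 + t ^ 2) ^ (-(5:ℝ)/4)) ^ 2

/-- `I(α) = ∫₀^α (√α/√(α−s)) (1+s²)^{-5/4} ds`. -/
noncomputable def Ifun (α : ℝ) : ℝ :=
  ∫ s in (0:ℝ)..α, (Real.sqrt α / Real.sqrt (α - s)) * (1 + s ^ 2) ^ (-(5:ℝ)/4)

/-- `J(α) = ∫₀^α (√α/√(α−s)) · s (1+s²)^{-5/4} ds`. -/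
noncomputable def Jfun (α : ℝ) : ℝ :=
  ∫ s in (0:ℝ)..α, (Real.sqrt α / Real.sqrt (α - s)) * (s * (1 + s ^ 2) ^ (-(5:ℝ)/4))

/-!
Translation invariance of the elastic energy makes the vector `κ_s N + (κ²/2) T` constant
along a solution (`T`, `N` the unit tangent and normal of the graph, `s` arclength). Its
components `X`, `Y` satisfy the pointwise identities `κ' = Y - X u'` and
`κ² √(1 + u'²) = 2 (X + Y u')`. The shooting data give `X = 2 α b²` and `Y = -2 b²`, where
`b = ∫₀^α (α - t)^{-1/2} (1 + t²)^{-5/4} dt`. Integrating the first identity gives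
`κ(x) = -2 b² x - 2 α b² u(x)`. At `x = 1/2`, where `u' = 0`, the second gives `κ² = 4 α b²`;
moreover `κ ≤ 0` throughout, since at every zero of `κ` we get `κ' = Y (1 + u'²) < 0`.
Hence `u(1/2) = (2 √α - b) / (2 α b)`, and the identity `I + α J = 2 α`, which comes from the
antiderivative `-2 √(α - t) (1 + t²)^{-1/4}`, turns this into `J / (2 I)`.
-/

open Set intervalIntegral

lemma eq_of_hasDerivAt_eq_zero {f : ℝ → ℝ} {a b : ℝ} (hab : a ≤ b)
    (hf : ContinuousOn f (Icc a b)) (hf' : ∀ x ∈ Ioo a b, HasDerivAt f 0 x) : f b = f a := by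
  rcases hab.eq_or_lt with rfl | hab
  · rfl
  obtain ⟨c, -, hc⟩ := exists_hasDerivAt_eq_slope f (fun _ => 0) hab hf hf'
  rw [eq_comm, div_eq_zero_iff, sub_eq_zero] at hc
  exact hc.resolve_right (sub_ne_zero.mpr hab.ne')

lemma rpow_neg_one_div_two_eq_inv_sqrt {q : ℝ} (hq : 0 ≤ q) : q ^ (-(1:ℝ)/2) = (√q)⁻¹ := by
  rw [neg_div, rpow_neg hq, sqrt_eq_rpow]

lemma rpow_natCast_div_two_eq_sqrt_pow {q : ℝ} (hq : 0 ≤ q) (n : ℕ) :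
    q ^ ((n:ℝ)/2) = √q ^ n := by
  rw [sqrt_eq_rpow, ← rpow_natCast, ← rpow_mul hq, one_div_mul_eq_div]

lemma continuous_one_add_sq_rpow (p : ℝ) : Continuous fun t : ℝ => (1 + t ^ 2) ^ p :=
  (by fun_prop : Continuous fun t : ℝ => 1 + t ^ 2).rpow_const fun _ => Or.inl (by positivity)

noncomputable def abelIntegral (g : ℝ → ℝ) (α : ℝ) : ℝ :=
  ∫ t in (0:ℝ)..α, (α - t) ^ (-(1:ℝ)/2) * g t

section AbelIntegral

variable {α : ℝ} {g : ℝ → ℝ}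

lemma intervalIntegrable_abelIntegrand (hα : 0 ≤ α) (hg : ContinuousOn g (Icc 0 α)) :
    IntervalIntegrable (fun t => (α - t) ^ (-(1:ℝ)/2) * g t) volume 0 α := by
  have hkernel : IntervalIntegrable (fun t : ℝ => t ^ (-(1:ℝ)/2)) volume 0 α :=
    intervalIntegrable_rpow' (by norm_num)
  refine IntervalIntegrable.mul_continuousOn ?_ (by rwa [uIcc_of_le hα])
  simpa using (hkernel.comp_sub_left α).symm

lemma abelIntegral_pos (hα : 0 < α) (hg : ContinuousOn g (Icc 0 α))
    (hpos : ∀ t ∈ Ioo 0 α, 0 < g t) : 0 < abelIntegral g α :=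
  intervalIntegral_pos_of_pos_on (intervalIntegrable_abelIntegrand hα.le hg)
    (fun t ht => mul_pos (rpow_pos_of_pos (sub_pos.mpr ht.2) _) (hpos t ht)) hα

lemma sqrt_mul_abelIntegral (hα : 0 ≤ α) :
    √α * abelIntegral g α = ∫ s in (0:ℝ)..α, √α / √(α - s) * g s := by
  rw [abelIntegral, ← intervalIntegral.integral_const_mul]
  refine integral_congr fun s hs => ?_
  rw [uIcc_of_le hα] at hs
  rw [rpow_neg_one_div_two_eq_inv_sqrt (sub_nonneg.mpr hs.2), div_eq_mul_inv, mul_assoc]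

lemma abelIntegral_one_add_mul_mul_rpow (hα : 0 < α) :
    abelIntegral (fun t => (1 + α * t) * (1 + t ^ 2) ^ (-(5:ℝ)/4)) α = 2 * √α := by
  set H : ℝ → ℝ := fun t => -2 * √(α - t) * (1 + t ^ 2) ^ (-(1:ℝ)/4)
  have hcont : Continuous H :=
    (continuous_const.mul (continuous_const.sub continuous_id).sqrt).mul
      (continuous_one_add_sq_rpow _)
  have hderiv : ∀ t ∈ Ioo 0 α, HasDerivAt H
      ((α - t) ^ (-(1:ℝ)/2) * ((1 + α * t) * (1 + t ^ 2) ^ (-(5:ℝ)/4))) t := by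
    intro t ht
    have hαt : 0 < α - t := sub_pos.mpr ht.2
    have hq : 0 < 1 + t ^ 2 := by positivity
    have hsqrt : HasDerivAt (fun y => √(α - y)) (-1 / (2 * √(α - t))) t := by
      simpa using ((hasDerivAt_id t).const_sub α).sqrt hαt.ne'
    have hpow : HasDerivAt (fun y : ℝ => (1 + y ^ 2) ^ (-(1:ℝ)/4))
        (2 * t * (-(1:ℝ)/4) * (1 + t ^ 2) ^ (-(1:ℝ)/4 - 1)) t := by
      simpa using ((hasDerivAt_pow 2 t).const_add 1).rpow_const (p := -(1:ℝ)/4) (Or.inl hq.ne')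
    refine ((hsqrt.const_mul (-2)).mul hpow).congr_deriv ?_
    rw [rpow_neg_one_div_two_eq_inv_sqrt hαt.le,
      show (-(1:ℝ)/4 - 1) = -(5:ℝ)/4 by norm_num,
      show (-(1:ℝ)/4) = 1 + -(5:ℝ)/4 by norm_num, rpow_add hq, rpow_one]
    have hs := sq_sqrt hαt.le
    field_simp
    linear_combination (4 * t) * hs
  have hint := intervalIntegrable_abelIntegrand hα.le
    (g := fun t => (1 + α * t) * (1 + t ^ 2) ^ (-(5:ℝ)/4))
    (((by fun_prop : Continuous fun t : ℝ => 1 + α * t).mul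
      (continuous_one_add_sq_rpow _)).continuousOn)
  rw [abelIntegral, integral_eq_sub_of_hasDerivAt_of_le hα.le hcont.continuousOn hderiv hint]
  simp [H]

lemma abelIntegral_add_mul_abelIntegral (hα : 0 < α) :
    abelIntegral (fun t => (1 + t ^ 2) ^ (-(5:ℝ)/4)) α
      + α * abelIntegral (fun t => t * (1 + t ^ 2) ^ (-(5:ℝ)/4)) α = 2 * √α := by
  have hint := fun {g : ℝ → ℝ} (hg : Continuous g) =>
    intervalIntegrable_abelIntegrand hα.le hg.continuousOn
  rw [← abelIntegral_one_add_mul_mul_rpow hα, abelIntegral, abelIntegral, abelIntegral,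
    ← intervalIntegral.integral_const_mul,
    ← integral_add (hint (continuous_one_add_sq_rpow (-(5:ℝ)/4)))
      ((hint (g := fun t => t * (1 + t ^ 2) ^ (-(5:ℝ)/4))
        (continuous_id.mul (continuous_one_add_sq_rpow _))).const_mul α)]
  exact integral_congr fun t _ => by ring

lemma Ifun_eq_sqrt_mul_abelIntegral (hα : 0 ≤ α) :
    Ifun α = √α * abelIntegral (fun t => (1 + t ^ 2) ^ (-(5:ℝ)/4)) α :=
  (sqrt_mul_abelIntegral hα).symm

lemma Jfun_eq_sqrt_mul_abelIntegral (hα : 0 ≤ α) :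
    Jfun α = √α * abelIntegral (fun t => t * (1 + t ^ 2) ^ (-(5:ℝ)/4)) α :=
  (sqrt_mul_abelIntegral hα).symm

lemma βstar_eq_abelIntegral :
    βstar α = -2 * √(1 + α ^ 2) ^ 5 * abelIntegral (fun t => (1 + t ^ 2) ^ (-(5:ℝ)/4)) α ^ 2 := by
  rw [βstar, show (5:ℝ) / 2 = ((5:ℕ):ℝ) / 2 by norm_num,
    rpow_natCast_div_two_eq_sqrt_pow (by positivity)]
  rfl

end AbelIntegral

noncomputable def graphSpeed (u : ℝ → ℝ) (x : ℝ) : ℝ := √(1 + deriv u x ^ 2)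

noncomputable def curvArcDeriv (u : ℝ → ℝ) (x : ℝ) : ℝ := deriv (curv u) x / graphSpeed u x

/-- `conservedX` and `conservedY` are the components of `κ_s N + (κ²/2) T`, with
`T = (1, u') / √(1 + u'²)` and `N = (-u', 1) / √(1 + u'²)`. -/
noncomputable def conservedX (u : ℝ → ℝ) (x : ℝ) : ℝ :=
  (-(curvArcDeriv u x * deriv u x) + curv u x ^ 2 / 2) / graphSpeed u x

noncomputable def conservedY (u : ℝ → ℝ) (x : ℝ) : ℝ :=
  (curvArcDeriv u x + curv u x ^ 2 / 2 * deriv u x) / graphSpeed u x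

section Elastica

variable {u : ℝ → ℝ} {x a b A B α : ℝ} {E : Set ℝ}

lemma graphSpeed_pos : 0 < graphSpeed u x := sqrt_pos.mpr (by positivity)

lemma sq_graphSpeed : graphSpeed u x ^ 2 = 1 + deriv u x ^ 2 := sq_sqrt (by positivity)

lemma curv_eq_div_graphSpeed_pow : curv u x = iteratedDeriv 2 u x / graphSpeed u x ^ 3 := by
  rw [curv, graphSpeed, ← rpow_natCast_div_two_eq_sqrt_pow (by positivity)]
  norm_num

lemma deriv_curv_eq_conservedY_sub :
    deriv (curv u) x = conservedY u x - conservedX u x * deriv u x := by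
  have hs := (graphSpeed_pos (u := u) (x := x)).ne'
  rw [conservedX, conservedY, curvArcDeriv]
  field_simp
  linear_combination 2 * deriv (curv u) x * sq_graphSpeed (u := u) (x := x)

lemma curv_sq_mul_graphSpeed :
    curv u x ^ 2 * graphSpeed u x = 2 * (conservedX u x + conservedY u x * deriv u x) := by
  have hs := (graphSpeed_pos (u := u) (x := x)).ne'
  rw [conservedX, conservedY]
  field_simp
  linear_combination curv u x ^ 2 * sq_graphSpeed (u := u) (x := x)

lemma deriv_curv_of_curv_eq_zero (h : curv u x = 0) :
    deriv (curv u) x = conservedY u x * (1 + deriv u x ^ 2) := by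
  have hsq := curv_sq_mul_graphSpeed (u := u) (x := x)
  rw [h] at hsq
  linear_combination deriv_curv_eq_conservedY_sub (u := u) (x := x) + deriv u x / 2 * hsq

lemma curv_eq_neg_sqrt_of_deriv_eq_zero (h : deriv u x = 0) (hκ : curv u x ≤ 0) :
    curv u x = -√(2 * conservedX u x) := by
  have hsq := curv_sq_mul_graphSpeed (u := u) (x := x)
  rw [graphSpeed, h] at hsq
  norm_num at hsq
  rw [← hsq, sqrt_sq_eq_abs, abs_of_nonpos hκ, neg_neg]

lemma iteratedDeriv_two_eq : iteratedDeriv 2 u = deriv (deriv u) := by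
  rw [iteratedDeriv_succ, iteratedDeriv_one]

lemma contDiff_graphSpeed {n : WithTop ℕ∞} (hu : ContDiff ℝ (n + 1) u) :
    ContDiff ℝ n (graphSpeed u) :=
  (contDiff_const.add (hu.deriv'.pow 2)).sqrt fun _ => by positivity

lemma contDiff_curv {n : WithTop ℕ∞} (hu : ContDiff ℝ (n + 2) u) : ContDiff ℝ n (curv u) := by
  have hu' : ContDiff ℝ (n + 1 + 1) u := by rwa [add_assoc, one_add_one_eq_two]
  have hcurv : curv u = fun y => deriv (deriv u) y / graphSpeed u y ^ 3 := by
    ext y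
    rw [curv_eq_div_graphSpeed_pow, iteratedDeriv_two_eq]
  rw [hcurv]
  exact hu'.deriv'.deriv'.div (((contDiff_graphSpeed hu').of_le le_self_add).pow 3)
    fun _ => pow_ne_zero 3 graphSpeed_pos.ne'

lemma contDiff_curvArcDeriv {n : WithTop ℕ∞} (hu : ContDiff ℝ (n + 3) u) :
    ContDiff ℝ n (curvArcDeriv u) := by
  have hu₁ : ContDiff ℝ (n + 1 + 2) u := by
    rwa [add_assoc, show (1 + 2 : WithTop ℕ∞) = 3 from rfl]
  have hu₂ : ContDiff ℝ (n + 2 + 1) u := by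
    rwa [add_assoc, show (2 + 1 : WithTop ℕ∞) = 3 from rfl]
  exact (contDiff_curv hu₁).deriv'.div ((contDiff_graphSpeed hu₂).of_le le_self_add)
    fun _ => graphSpeed_pos.ne'

lemma hasDerivAt_deriv_curv_mul (hu : ContDiff ℝ 2 u) (x : ℝ) :
    HasDerivAt (deriv u) (curv u x * graphSpeed u x ^ 3) x := by
  rw [curv_eq_div_graphSpeed_pow, div_mul_cancel₀ _ (pow_ne_zero 3 graphSpeed_pos.ne'),
    iteratedDeriv_two_eq]
  exact (hu.differentiable_deriv_two x).hasDerivAt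

lemma hasDerivAt_graphSpeed (hu : ContDiff ℝ 2 u) (x : ℝ) :
    HasDerivAt (graphSpeed u) (deriv u x * curv u x * graphSpeed u x ^ 2) x := by
  have h := (((hasDerivAt_deriv_curv_mul hu x).pow 2).const_add 1).sqrt
    (sq_graphSpeed (u := u) (x := x) ▸ (pow_pos graphSpeed_pos 2).ne')
  change HasDerivAt (graphSpeed u) (_ / (2 * graphSpeed u x)) x at h
  refine h.congr_deriv ?_
  have hs := (graphSpeed_pos (u := u) (x := x)).ne'
  field_simp
  ring

lemma hasDerivAt_curv (hu : ContDiff ℝ 3 u) (x : ℝ) :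
    HasDerivAt (curv u) (curvArcDeriv u x * graphSpeed u x) x := by
  rw [curvArcDeriv, div_mul_cancel₀ _ graphSpeed_pos.ne']
  exact ((contDiff_curv (n := 1) hu).differentiable one_ne_zero x).hasDerivAt

lemma hasDerivAt_curvArcDeriv (hu : ContDiff ℝ 4 u) (heq : ElasticaOn u E) (hx : x ∈ E) :
    HasDerivAt (curvArcDeriv u) (-(curv u x ^ 3 / 2 * graphSpeed u x)) x := by
  have h : 1 / graphSpeed u x * deriv (curvArcDeriv u) x + 1 / 2 * curv u x ^ 3 = 0 := heq x hx
  have hs := (graphSpeed_pos (u := u) (x := x)).ne'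
  have hderiv : deriv (curvArcDeriv u) x = -(curv u x ^ 3 / 2 * graphSpeed u x) := by
    field_simp at h
    linear_combination h / 2
  rw [← hderiv]
  exact ((contDiff_curvArcDeriv (n := 1) hu).differentiable one_ne_zero x).hasDerivAt

lemma hasDerivAt_conservedX (hu : ContDiff ℝ 4 u) (heq : ElasticaOn u E) (hx : x ∈ E) :
    HasDerivAt (conservedX u) 0 x := by
  have hu2 : ContDiff ℝ 2 u := hu.of_le (by norm_num)
  have h := (((hasDerivAt_curvArcDeriv hu heq hx).mul (hasDerivAt_deriv_curv_mul hu2 x)).neg.add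
    (((hasDerivAt_curv (hu.of_le (by norm_num)) x).pow 2).div_const 2)).div
    (hasDerivAt_graphSpeed hu2 x) graphSpeed_pos.ne'
  refine h.congr_deriv ?_
  have hs := (graphSpeed_pos (u := u) (x := x)).ne'
  simp only [Pi.add_apply, Pi.neg_apply, Pi.mul_apply, Pi.pow_apply, Nat.cast_ofNat]
  field_simp
  linear_combination (-2 * curv u x * curvArcDeriv u x) * sq_graphSpeed (u := u) (x := x)

lemma hasDerivAt_conservedY (hu : ContDiff ℝ 4 u) (heq : ElasticaOn u E) (hx : x ∈ E) :
    HasDerivAt (conservedY u) 0 x := by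
  have hu2 : ContDiff ℝ 2 u := hu.of_le (by norm_num)
  have h := ((hasDerivAt_curvArcDeriv hu heq hx).add
    ((((hasDerivAt_curv (hu.of_le (by norm_num)) x).pow 2).div_const 2).mul
      (hasDerivAt_deriv_curv_mul hu2 x))).div
    (hasDerivAt_graphSpeed hu2 x) graphSpeed_pos.ne'
  refine h.congr_deriv ?_
  have hs := (graphSpeed_pos (u := u) (x := x)).ne'
  simp only [Pi.add_apply, Pi.mul_apply, Pi.pow_apply, Nat.cast_ofNat]
  field_simp
  linear_combination curv u x ^ 3 * sq_graphSpeed (u := u) (x := x)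

lemma continuous_conservedX (hu : ContDiff ℝ 3 u) : Continuous (conservedX u) :=
  (((contDiff_curvArcDeriv (n := 0) hu).continuous.mul
      (hu.continuous_deriv (by norm_num))).neg.add
    (((contDiff_curv (n := 1) hu).continuous.pow 2).div_const 2)).div
    (contDiff_graphSpeed (n := 2) hu).continuous fun _ => graphSpeed_pos.ne'

lemma continuous_conservedY (hu : ContDiff ℝ 3 u) : Continuous (conservedY u) :=
  ((contDiff_curvArcDeriv (n := 0) hu).continuous.add
    ((((contDiff_curv (n := 1) hu).continuous.pow 2).div_const 2).mul
      (hu.continuous_deriv (by norm_num)))).div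
    (contDiff_graphSpeed (n := 2) hu).continuous fun _ => graphSpeed_pos.ne'

lemma conservedX_eq_of_elasticaOn (hu : ContDiff ℝ 4 u) (heq : ElasticaOn u (Ioo a b))
    (hx : x ∈ Icc a b) : conservedX u x = conservedX u a :=
  eq_of_hasDerivAt_eq_zero hx.1 (continuous_conservedX (hu.of_le (by norm_num))).continuousOn
    fun _ hy => hasDerivAt_conservedX hu heq ⟨hy.1, hy.2.trans_le hx.2⟩

lemma conservedY_eq_of_elasticaOn (hu : ContDiff ℝ 4 u) (heq : ElasticaOn u (Ioo a b))
    (hx : x ∈ Icc a b) : conservedY u x = conservedY u a :=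
  eq_of_hasDerivAt_eq_zero hx.1 (continuous_conservedY (hu.of_le (by norm_num))).continuousOn
    fun _ hy => hasDerivAt_conservedY hu heq ⟨hy.1, hy.2.trans_le hx.2⟩

lemma curv_nonpos_of_conservedY_neg (hu : ContDiff ℝ 3 u)
    (hY : ∀ x ∈ Ico a b, conservedY u x < 0) (ha : curv u a ≤ 0) :
    ∀ x ∈ Icc a b, curv u x ≤ 0 := by
  refine image_le_of_deriv_right_lt_deriv_boundary
    (contDiff_curv (n := 1) hu).continuous.continuousOn
    (fun x _ => (hasDerivAt_curv hu x).hasDerivWithinAt) ha (fun _ => hasDerivAt_const _ 0) ?_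
  intro x hx hκ
  rw [(hasDerivAt_curv hu x).deriv.symm, deriv_curv_of_curv_eq_zero hκ]
  exact mul_neg_of_neg_of_pos (hY x hx) (by positivity)

lemma curv_add_mul_sub_mul_eq (hu : ContDiff ℝ 3 u) (hab : a ≤ b)
    (hX : ∀ x ∈ Ioo a b, conservedX u x = A) (hY : ∀ x ∈ Ioo a b, conservedY u x = B) :
    curv u b + A * u b - B * b = curv u a + A * u a - B * a := by
  refine eq_of_hasDerivAt_eq_zero (f := fun x => curv u x + A * u x - B * x) hab
    (((contDiff_curv (n := 1) hu).continuous.add (continuous_const.mul hu.continuous)).sub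
      (continuous_const.mul continuous_id)).continuousOn fun x hx => ?_
  have hu' := (hu.differentiable (by norm_num) x).hasDerivAt
  refine (((hasDerivAt_curv hu x).add (hu'.const_mul A)).sub
    ((hasDerivAt_id x).const_mul B)).congr_deriv ?_
  rw [(hasDerivAt_curv hu x).deriv.symm, deriv_curv_eq_conservedY_sub, hX x hx, hY x hx]
  ring

lemma curv_eq_zero_of_iteratedDeriv_two_eq_zero (h2 : iteratedDeriv 2 u x = 0) :
    curv u x = 0 := by
  rw [curv, h2, zero_div]

lemma curvArcDeriv_of_iteratedDeriv_two_eq_zero (hu : ContDiff ℝ 3 u)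
    (h2 : iteratedDeriv 2 u x = 0) :
    curvArcDeriv u x = iteratedDeriv 3 u x / graphSpeed u x ^ 4 := by
  have hs := (graphSpeed_pos (u := u) (x := x)).ne'
  have hu2 : HasDerivAt (iteratedDeriv 2 u) (iteratedDeriv 3 u x) x := by
    have h := ((hu.iterate_deriv' 1 2).differentiable one_ne_zero x).hasDerivAt
    rwa [← iteratedDeriv_eq_iterate, ← iteratedDeriv_succ] at h
  have hcurv : curv u = iteratedDeriv 2 u / graphSpeed u ^ 3 :=
    funext fun _ => curv_eq_div_graphSpeed_pow
  have h := hu2.div ((hasDerivAt_graphSpeed (hu.of_le (by norm_num)) x).pow 3)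
    (pow_ne_zero 3 hs)
  rw [curvArcDeriv, hcurv, h.deriv, h2]
  simp only [Pi.pow_apply, zero_mul, sub_zero]
  field_simp

lemma conservedX_of_βstar (hu : ContDiff ℝ 3 u) (h1 : deriv u x = α)
    (h2 : iteratedDeriv 2 u x = 0) (h3 : iteratedDeriv 3 u x = βstar α) :
    conservedX u x = 2 * α * abelIntegral (fun t => (1 + t ^ 2) ^ (-(5:ℝ)/4)) α ^ 2 := by
  have hs : graphSpeed u x = √(1 + α ^ 2) := by rw [graphSpeed, h1]
  have hs_pos : 0 < √(1 + α ^ 2) := by positivity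
  rw [conservedX, curvArcDeriv_of_iteratedDeriv_two_eq_zero hu h2,
    curv_eq_zero_of_iteratedDeriv_two_eq_zero h2, h3, βstar_eq_abelIntegral, hs, h1]
  field_simp
  ring

lemma conservedY_of_βstar (hu : ContDiff ℝ 3 u) (h1 : deriv u x = α)
    (h2 : iteratedDeriv 2 u x = 0) (h3 : iteratedDeriv 3 u x = βstar α) :
    conservedY u x = -2 * abelIntegral (fun t => (1 + t ^ 2) ^ (-(5:ℝ)/4)) α ^ 2 := by
  have hs : graphSpeed u x = √(1 + α ^ 2) := by rw [graphSpeed, h1]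
  have hs_pos : 0 < √(1 + α ^ 2) := by positivity
  rw [conservedY, curvArcDeriv_of_iteratedDeriv_two_eq_zero hu h2,
    curv_eq_zero_of_iteratedDeriv_two_eq_zero h2, h3, βstar_eq_abelIntegral, hs]
  field_simp
  ring

end Elastica

/-- If `u ∈ C⁴` solves the elastica equation on `(0,1/2)` with shooting data
`u(0) = 0`, `u'(0) = α`, `u''(0) = 0`, `u'''(0) = β_*(α)`, and `u'(1/2) = 0`, then
`u(1/2) = J(α)/(2I(α))`. -/
theorem stmt_9 (α : ℝ) (hα : 0 < α) (u : ℝ → ℝ) (hu : ContDiff ℝ 4 u)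
    (heq : ElasticaOn u (Set.Ioo 0 (1/2)))
    (h0 : u 0 = 0) (h1 : deriv u 0 = α) (h2 : iteratedDeriv 2 u 0 = 0)
    (h3 : iteratedDeriv 3 u 0 = βstar α) (hend : deriv u (1/2) = 0) :
    u (1/2) = Jfun α / (2 * Ifun α) := by
  have hu3 : ContDiff ℝ 3 u := hu.of_le (by norm_num)
  have hkey := abelIntegral_add_mul_abelIntegral hα
  have hX0 := conservedX_of_βstar hu3 h1 h2 h3
  have hY0 := conservedY_of_βstar hu3 h1 h2 h3
  have hb := abelIntegral_pos hα (continuous_one_add_sq_rpow (-(5:ℝ)/4)).continuousOn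
    fun t _ => by positivity
  rw [Jfun_eq_sqrt_mul_abelIntegral hα.le, Ifun_eq_sqrt_mul_abelIntegral hα.le]
  set b := abelIntegral (fun t => (1 + t ^ 2) ^ (-(5:ℝ)/4)) α
  set b' := abelIntegral (fun t => t * (1 + t ^ 2) ^ (-(5:ℝ)/4)) α
  clear_value b b'
  have hX : ∀ x ∈ Icc (0:ℝ) (1/2), conservedX u x = 2 * α * b ^ 2 :=
    fun x hx => (conservedX_eq_of_elasticaOn hu heq hx).trans hX0
  have hY : ∀ x ∈ Icc (0:ℝ) (1/2), conservedY u x = -2 * b ^ 2 :=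
    fun x hx => (conservedY_eq_of_elasticaOn hu heq hx).trans hY0
  have hhalf : (1/2 : ℝ) ∈ Icc (0:ℝ) (1/2) := right_mem_Icc.mpr (by norm_num)
  have hκ_nonpos := curv_nonpos_of_conservedY_neg hu3
    (fun x hx => by rw [hY x (Ico_subset_Icc_self hx)]; nlinarith)
    (curv_eq_zero_of_iteratedDeriv_two_eq_zero h2).le _ hhalf
  have hκ : curv u (1/2) = -(2 * √α * b) := by
    rw [curv_eq_neg_sqrt_of_deriv_eq_zero hend hκ_nonpos, hX _ hhalf,
      show 2 * (2 * α * b ^ 2) = (2 * b) ^ 2 * α by ring, sqrt_mul (by positivity),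
      sqrt_sq (by positivity)]
    ring
  have hlin := curv_add_mul_sub_mul_eq hu3 (by norm_num : (0:ℝ) ≤ 1/2)
    (fun x hx => hX x (Ioo_subset_Icc_self hx)) (fun x hx => hY x (Ioo_subset_Icc_self hx))
  rw [hκ, h0, curv_eq_zero_of_iteratedDeriv_two_eq_zero h2] at hlin
  field_simp
  refine mul_left_cancel₀ (mul_pos hα hb).ne' ?_
  linear_combination hlin - b * hkey
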